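/- Suppose μ has no atoms, μ(X) = ∞, and μ is doubling. For every x ∈ X and r > 0 there exists R > 0 such that B̃(x,r) ⊆ B(x,R) and μ(B(x,R)) ≤ C·μ(B̃(x,r)), where C depends only on the doubling constant. -/

import Mathlib

/-!
Balls `B(x, t)` with `μ(B(x, t)) ≤ r` lie in `B̃(x, r)`. Conversely, a ball containing `x` and a
point outside `B(x, 2ρ)` has radius `> ρ`, so by doubling its measure is at least
`μ(B(x, ρ)) / C`; hence `B̃(x, r) ⊆ B(x, 2ρ)` as soon as `μ(B(x, ρ)) > C r`. Without atoms and
with infinite total mass, `t ↦ μ(B(x, t))` takes values below and above every positive level, and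
doubling lets it cross the levels `r` and `C² r` within a factor `C` (at radii `t₀` and `ρ`), which
gives `μ(B(x, 2ρ)) ≤ C · C² r < C⁴ μ(B(x, t₀)) ≤ C⁴ μ(B̃(x, r))`.
-/

open MeasureTheory Metric Set Filter Topology ENNReal

/-- Take `t` just above half of `sup {t > 0 | f t ≤ v}`. -/
theorem MonotoneOn.exists_pos_le_lt_mul_of_doubling {f : ℝ → ℝ} {C v : ℝ}
    (hmono : MonotoneOn f (Ioi 0)) (hdouble : ∀ t, 0 < t → f (2 * t) ≤ C * f t)
    (hsmall : ∃ t > 0, f t ≤ v) (hlarge : ∃ t > 0, v < f t) :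
    ∃ t > 0, f t ≤ v ∧ v < C * f t := by
  set S := {t | 0 < t ∧ f t ≤ v}
  obtain ⟨s, hs, hfs⟩ := hsmall
  obtain ⟨T, hT, hvT⟩ := hlarge
  have hbdd : BddAbove S := ⟨T, fun t ⟨ht, hft⟩ => by
    by_contra! hTt
    exact (hvT.trans_le (hmono hT ht hTt.le)).not_ge hft⟩
  have hpos : 0 < sSup S := hs.trans_le (le_csSup hbdd ⟨hs, hfs⟩)
  obtain ⟨t, ⟨ht, hft⟩, hlt⟩ :=
    exists_lt_of_lt_csSup (show S.Nonempty from ⟨s, hs, hfs⟩) (half_lt_self hpos)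
  have hv : v < f (2 * t) := by
    by_contra! h
    exact (le_csSup hbdd ⟨by positivity, h⟩).not_gt (by linarith)
  exact ⟨t, ht, hft, hv.trans_le (hdouble t ht)⟩

theorem exists_pos_measure_closedBall_lt {X : Type*} [MetricSpace X] [MeasurableSpace X]
    [OpensMeasurableSpace X] {μ : Measure X} {x : X} (hx : μ {x} = 0)
    (hfin : ∃ R > 0, μ (closedBall x R) ≠ ∞) {ε : ℝ≥0∞} (hε : 0 < ε) :
    ∃ t > 0, μ (closedBall x t) < ε := by
  have hlim : Tendsto (fun t => μ (cthickening t {x})) (𝓝[>] 0) (𝓝 0) := by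
    rw [← hx]
    refine (tendsto_measure_cthickening_of_isClosed ?_ isClosed_singleton).mono_left
      nhdsWithin_le_nhds
    obtain ⟨R, hR, hRfin⟩ := hfin
    exact ⟨R, hR, by rwa [cthickening_singleton x hR.le]⟩
  obtain ⟨t, hlt, ht⟩ := ((hlim.eventually_lt_const hε).and self_mem_nhdsWithin).exists
  exact ⟨t, ht, by rwa [← cthickening_singleton x ht.le]⟩

theorem exists_pos_lt_measure_closedBall {X : Type*} [PseudoMetricSpace X] [MeasurableSpace X]
    {μ : Measure X} (huniv : μ univ = ∞) (x : X) {ε : ℝ≥0∞} (hε : ε < ∞) :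
    ∃ t > 0, ε < μ (closedBall x t) := by
  have hlim : Tendsto (fun n : ℕ => μ (closedBall x n)) atTop (𝓝 ∞) := by
    rw [← huniv, ← iUnion_closedBall_nat x]
    exact tendsto_measure_iUnion_atTop fun m n hmn => closedBall_subset_closedBall
      (Nat.cast_le.mpr hmn)
  obtain ⟨n, hlt, hn⟩ :=
    ((hlim.eventually_const_lt hε).and (eventually_ge_atTop 1)).exists
  exact ⟨n, by exact_mod_cast hn, hlt⟩

section Dtilde

variable {X : Type*} [PseudoMetricSpace X] [MeasurableSpace X]

noncomputable def dtilde (μ : Measure X) (x y : X) : ℝ :=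
  sInf {m : ℝ | ∃ (z : X) (r : ℝ), x ∈ closedBall z r ∧ y ∈ closedBall z r ∧
    m = (μ (closedBall z r)).toReal}

variable {μ : Measure X} {x y : X}

theorem dtilde_le_toReal_measure_closedBall {z : X} {r : ℝ} (hx : x ∈ closedBall z r)
    (hy : y ∈ closedBall z r) : dtilde μ x y ≤ (μ (closedBall z r)).toReal :=
  csInf_le ⟨0, by rintro _ ⟨_, _, _, _, rfl⟩; exact toReal_nonneg⟩ ⟨z, r, hx, hy, rfl⟩

theorem closedBall_subset_setOf_dtilde_le {t r : ℝ} (ht : 0 ≤ t)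
    (h : (μ (closedBall x t)).toReal ≤ r) : closedBall x t ⊆ {y | dtilde μ x y ≤ r} :=
  fun _ hy => (dtilde_le_toReal_measure_closedBall (mem_closedBall_self ht) hy).trans h

/-- A ball `B(z, s)` containing two points at distance `> 2ρ` has `s > ρ`, so its double
contains `B(x, ρ)`. -/
theorem toReal_measure_closedBall_le_mul_dtilde {C ρ : ℝ} (hC : 0 < C)
    (hfin : ∀ z t, 0 < t → μ (closedBall z t) ≠ ∞)
    (hdouble : ∀ z t, 0 < t →
      (μ (closedBall z (2 * t))).toReal ≤ C * (μ (closedBall z t)).toReal)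
    (hρ : 0 ≤ ρ) (hxy : 2 * ρ < dist x y) :
    (μ (closedBall x ρ)).toReal ≤ C * dtilde μ x y := by
  rw [← div_le_iff₀' hC]
  refine le_csInf ⟨_, x, dist x y, mem_closedBall_self dist_nonneg,
    mem_closedBall.2 (dist_comm y x).le, rfl⟩ ?_
  rintro _ ⟨z, s, hxz, hyz, rfl⟩
  rw [mem_closedBall] at hxz hyz
  have hρs : ρ < s := by linarith [dist_triangle_right x y z]
  have hsub : closedBall x ρ ⊆ closedBall z (2 * s) := closedBall_subset_closedBall' (by linarith)
  rw [div_le_iff₀' hC]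
  calc (μ (closedBall x ρ)).toReal ≤ (μ (closedBall z (2 * s))).toReal :=
        toReal_mono (hfin z _ (by linarith)) (measure_mono hsub)
    _ ≤ C * (μ (closedBall z s)).toReal := hdouble z s (by linarith)

theorem setOf_dtilde_le_subset_closedBall {C ρ r : ℝ} (hC : 0 < C)
    (hfin : ∀ z t, 0 < t → μ (closedBall z t) ≠ ∞)
    (hdouble : ∀ z t, 0 < t →
      (μ (closedBall z (2 * t))).toReal ≤ C * (μ (closedBall z t)).toReal) (hρ : 0 ≤ ρ)
    (h : C * r < (μ (closedBall x ρ)).toReal) :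
    {y | dtilde μ x y ≤ r} ⊆ closedBall x (2 * ρ) := by
  intro y hy
  by_contra hy'
  rw [mem_closedBall, not_le, dist_comm] at hy'
  have := toReal_measure_closedBall_le_mul_dtilde hC hfin hdouble hρ hy'
  linarith [mul_le_mul_of_nonneg_left (show dtilde μ x y ≤ r from hy) hC.le]

end Dtilde

/-- If `μ` has no atoms, `μ(X) = ∞`, and `μ` is doubling, then every `d̃`-ball
`B̃(x,r)` is contained in a metric ball `B(x,R)` of comparable measure. -/
theorem dtilde_ball_inside_metric_ball
    {X : Type*} [MetricSpace X] [MeasurableSpace X] [BorelSpace X]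
    (μ : Measure X)
    (hvol : ∀ (x : X) (r : ℝ), 0 < r → 0 < (μ (closedBall x r)).toReal)
    (hna : ∀ x : X, μ {x} = 0)
    (hinf : μ Set.univ = ⊤)
    (C : ℝ) (hC : 0 < C)
    (hdouble : ∀ (x : X) (r : ℝ), 0 < r →
      (μ (closedBall x (2 * r))).toReal ≤ C * (μ (closedBall x r)).toReal)
    (dt : X → X → ℝ)
    (hdt : ∀ x y : X, dt x y =
      sInf {m : ℝ | ∃ (z : X) (r : ℝ), x ∈ closedBall z r ∧ y ∈ closedBall z r ∧
        m = (μ (closedBall z r)).toReal}) :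
    ∃ C' > (0 : ℝ), ∀ (x : X) (r : ℝ), 0 < r → ∃ R > (0 : ℝ),
      {y : X | dt x y ≤ r} ⊆ closedBall x R ∧
      (μ (closedBall x R)).toReal ≤ C' * (μ {y : X | dt x y ≤ r}).toReal := by
  obtain rfl : dt = dtilde μ := funext₂ hdt
  have hfin : ∀ z t, 0 < t → μ (closedBall z t) ≠ ∞ :=
    fun z t ht => (toReal_pos_iff.1 (hvol z t ht)).2.ne
  refine ⟨C ^ 4, by positivity, fun x r hr => ?_⟩
  set f : ℝ → ℝ := fun t => (μ (closedBall x t)).toReal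
  have hmono : MonotoneOn f (Ioi 0) := fun _ _ t ht hst =>
    toReal_mono (hfin x t ht) (measure_mono (closedBall_subset_closedBall hst))
  have hsmall : ∀ v > 0, ∃ t > 0, f t ≤ v := fun v hv => by
    obtain ⟨t, ht, hlt⟩ := exists_pos_measure_closedBall_lt (hna x) ⟨1, one_pos, hfin x 1 one_pos⟩
      (ofReal_pos.2 hv)
    exact ⟨t, ht, toReal_le_of_le_ofReal hv.le hlt.le⟩
  have hlarge : ∀ v > 0, ∃ t > 0, v < f t := fun v hv => by
    obtain ⟨t, ht, hlt⟩ := exists_pos_lt_measure_closedBall hinf x (ofReal_lt_top (r := v))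
    exact ⟨t, ht, (ofReal_lt_iff_lt_toReal hv.le (hfin x t ht)).1 hlt⟩
  obtain ⟨t₀, ht₀, hft₀, hrt₀⟩ :=
    hmono.exists_pos_le_lt_mul_of_doubling (hdouble x) (hsmall r hr) (hlarge r hr)
  have hC2r : 0 < C ^ 2 * r := by positivity
  obtain ⟨ρ, hρ, hfρ, hρlt⟩ :=
    hmono.exists_pos_le_lt_mul_of_doubling (hdouble x) (hsmall _ hC2r) (hlarge _ hC2r)
  have hρlarge : C * r < f ρ := lt_of_mul_lt_mul_left (by linarith) hC.le
  have hsub := setOf_dtilde_le_subset_closedBall hC hfin hdouble hρ.le hρlarge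
  have hsup := closedBall_subset_setOf_dtilde_le (μ := μ) ht₀.le hft₀
  refine ⟨2 * ρ, by positivity, hsub, ?_⟩
  calc f (2 * ρ) ≤ C * f ρ := hdouble x ρ hρ
    _ ≤ C * (C ^ 2 * r) := by gcongr
    _ ≤ C * (C ^ 2 * (C * f t₀)) := by gcongr
    _ = C ^ 4 * f t₀ := by ring
    _ ≤ C ^ 4 * (μ {y | dtilde μ x y ≤ r}).toReal := by
      gcongr
      exact toReal_mono (measure_ne_top_of_subset hsub (hfin x _ (by positivity)))
        (measure_mono hsup)
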